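/- For real numbers a > b > 0, define I(a, b) = (1/(2a)) · ∫_1^∞ dx / √(x(x−1)(x−(1−b²/a²))). Then I(a, b) = I((a+b)/2, √(ab)); that is, the elliptic integral I is invariant under one step of the arithmetic-geometric mean iteration. -/

import Mathlib

/-!
Substituting `x = 1 + t²/a²` turns `I(a, b)` into Gauss's form
`J(a, b) = ∫_0^∞ dt / √((t² + a²)(t² + b²))`. The Landen substitution `u = (t - ab/t)/2` maps
`(0, ∞)` bijectively onto `ℝ`, with `du = (t² + ab)/(2t²) dt` and
`(u² + ((a+b)/2)²)(u² + ab) = ((t² + ab)/(4t²))² (t² + a²)(t² + b²)`, so the integral of the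
`((a+b)/2, √(ab))` integrand over `ℝ` is `2 J(a, b)`. That integrand is even, so the same integral
is also `2 J((a+b)/2, √(ab))`.
-/

open MeasureTheory

/-- The elliptic integral `I(a, b) = (1/(2a)) ∫_1^∞ dx / √(x(x-1)(x-(1-b²/a²)))`. -/
noncomputable def agmIntegral (a b : ℝ) : ℝ :=
  (1 / (2 * a)) * ∫ x in Set.Ioi (1 : ℝ), 1 / Real.sqrt (x * (x - 1) * (x - (1 - b ^ 2 / a ^ 2)))

open Set

noncomputable def gaussIntegrand (a b t : ℝ) : ℝ := 1 / √((t ^ 2 + a ^ 2) * (t ^ 2 + b ^ 2))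

lemma gaussIntegrand_abs (a b t : ℝ) : gaussIntegrand a b |t| = gaussIntegrand a b t := by
  simp only [gaussIntegrand, sq_abs]

lemma integral_gaussIntegrand_eq_two_mul_integral_Ioi (a b : ℝ) :
    ∫ t, gaussIntegrand a b t = 2 * ∫ t in Ioi 0, gaussIntegrand a b t := by
  simpa only [gaussIntegrand_abs] using integral_comp_abs (f := gaussIntegrand a b)

lemma one_div_sqrt_sq_mul {c : ℝ} (hc : 0 < c) (S : ℝ) :
    1 / √(c ^ 2 * S) = c⁻¹ * (1 / √S) := by
  rw [Real.sqrt_mul (sq_nonneg c), Real.sqrt_sq hc.le]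
  field_simp

lemma image_one_add_div_sq_Ioi {a : ℝ} (ha : 0 < a) :
    (fun t => 1 + t ^ 2 / a ^ 2) '' Ioi 0 = Ioi 1 := by
  ext x
  constructor
  · rintro ⟨t, ht : 0 < t, rfl⟩
    simpa using (by positivity : 0 < t ^ 2 / a ^ 2)
  · intro hx
    have hx : 0 < x - 1 := sub_pos.2 hx
    refine ⟨a * √(x - 1), mul_pos ha (Real.sqrt_pos.2 hx), ?_⟩
    field_simp
    rw [Real.sq_sqrt hx.le]
    ring

lemma agmIntegral_eq_integral_gaussIntegrand {a : ℝ} (ha : 0 < a) (b : ℝ) :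
    agmIntegral a b = ∫ t in Ioi 0, gaussIntegrand a b t := by
  have hderiv : ∀ t ∈ Ioi (0 : ℝ),
      HasDerivWithinAt (fun t => 1 + t ^ 2 / a ^ 2) (2 * t / a ^ 2) (Ioi 0) t := by
    intro t _
    simpa using (((hasDerivAt_pow 2 t).div_const (a ^ 2)).const_add 1).hasDerivWithinAt
  have hinj : InjOn (fun t : ℝ => 1 + t ^ 2 / a ^ 2) (Ioi 0) := by
    intro x hx y hy hxy
    have : x ^ 2 = y ^ 2 := by field_simp at hxy; linarith
    exact (pow_left_inj₀ (le_of_lt hx) (le_of_lt hy) two_ne_zero).1 this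
  rw [agmIntegral, ← image_one_add_div_sq_Ioi ha,
    integral_image_eq_integral_abs_deriv_smul measurableSet_Ioi hderiv hinj, ← integral_const_mul]
  refine setIntegral_congr_fun measurableSet_Ioi fun t (ht : 0 < t) => ?_
  have hcube :
      (1 + t ^ 2 / a ^ 2) * (1 + t ^ 2 / a ^ 2 - 1) * (1 + t ^ 2 / a ^ 2 - (1 - b ^ 2 / a ^ 2))
      = (t / a ^ 3) ^ 2 * ((t ^ 2 + a ^ 2) * (t ^ 2 + b ^ 2)) := by
    field_simp; ring
  rw [smul_eq_mul, hcube, one_div_sqrt_sq_mul (by positivity), abs_of_pos (by positivity),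
    gaussIntegrand]
  field_simp

lemma strictMonoOn_half_sub_div {c : ℝ} (hc : 0 ≤ c) :
    StrictMonoOn (fun t => (t - c / t) / 2) (Ioi 0) := by
  intro x (hx : 0 < x) y _ hxy
  have : c / y ≤ c / x := div_le_div_of_nonneg_left hc hx hxy.le
  dsimp only
  linarith

lemma image_half_sub_div_Ioi {c : ℝ} (hc : 0 < c) : (fun t => (t - c / t) / 2) '' Ioi 0 = univ := by
  refine eq_univ_of_forall fun u => ?_
  have hs : √(u ^ 2 + c) ^ 2 = u ^ 2 + c := Real.sq_sqrt (by positivity)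
  have hpos : 0 < u + √(u ^ 2 + c) := by
    have : |u| < √(u ^ 2 + c) := by
      rw [← Real.sqrt_sq_eq_abs]
      exact Real.sqrt_lt_sqrt (sq_nonneg u) (by linarith)
    linarith [neg_abs_le u]
  refine ⟨u + √(u ^ 2 + c), hpos, ?_⟩
  field_simp
  linear_combination hs

lemma integral_gaussIntegrand_agm_step {a b : ℝ} (ha : 0 < a) (hb : 0 < b) :
    ∫ u, gaussIntegrand ((a + b) / 2) √(a * b) u = 2 * ∫ t in Ioi 0, gaussIntegrand a b t := by
  have hab : 0 < a * b := mul_pos ha hb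
  have hderiv : ∀ t ∈ Ioi (0 : ℝ),
      HasDerivWithinAt (fun t => (t - a * b / t) / 2) ((1 + a * b / t ^ 2) / 2) (Ioi 0) t := by
    intro t (ht : 0 < t)
    have h := (hasDerivAt_id' t).fun_sub ((hasDerivAt_inv ht.ne').const_mul (a * b))
    simp only [← div_eq_mul_inv] at h
    exact (h.div_const 2).hasDerivWithinAt.congr_deriv (by ring)
  rw [← setIntegral_univ, ← image_half_sub_div_Ioi hab,
    integral_image_eq_integral_abs_deriv_smul measurableSet_Ioi hderiv
      (strictMonoOn_half_sub_div hab.le).injOn, ← integral_const_mul]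
  refine setIntegral_congr_fun measurableSet_Ioi fun t (ht : 0 < t) => ?_
  have hquartic :
      (((t - a * b / t) / 2) ^ 2 + ((a + b) / 2) ^ 2) * (((t - a * b / t) / 2) ^ 2 + √(a * b) ^ 2)
      = ((t ^ 2 + a * b) / (4 * t ^ 2)) ^ 2 * ((t ^ 2 + a ^ 2) * (t ^ 2 + b ^ 2)) := by
    rw [Real.sq_sqrt hab.le]
    field_simp
    ring
  rw [smul_eq_mul, gaussIntegrand, hquartic, one_div_sqrt_sq_mul (by positivity),
    abs_of_pos (by positivity), gaussIntegrand]
  field_simp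
  ring

/-- For real numbers `a > b > 0`, the elliptic integral `I(a, b)` is invariant under one step of
the arithmetic-geometric mean iteration: `I(a, b) = I((a+b)/2, √(ab))`. -/
theorem agmIntegral_invariant (a b : ℝ) (hb : 0 < b) (hba : b < a) :
    agmIntegral a b = agmIntegral ((a + b) / 2) (Real.sqrt (a * b)) := by
  have ha : 0 < a := hb.trans hba
  have h := integral_gaussIntegrand_agm_step ha hb
  rw [integral_gaussIntegrand_eq_two_mul_integral_Ioi] at h
  rw [agmIntegral_eq_integral_gaussIntegrand ha,
    agmIntegral_eq_integral_gaussIntegrand (by positivity)]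
  linarith
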